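/- Let G and H be graphs and let S ⊆ V(G × H) (vertices common to the Cartesian and strong products). If every vertex of S has at least two neighbors outside S in the Cartesian product G □ H, then S is a failed zero forcing set for the strong product G ⊠ H, and hence F(G ⊠ H) ≥ |S|. -/

import Mathlib

namespace ZeroForcing

/-- One step of the zero forcing process: all vertices forced from blue set `S`
(a blue vertex with exactly one white neighbor forces that neighbor). -/
def step {V : Type*} (G : SimpleGraph V) (S : Set V) : Set V :=
  S ∪ {v | ∃ u ∈ S, G.Adj u v ∧ ∀ w, G.Adj u w → w ∉ S → w = v}

/-- `S` is a zero forcing set: iterating the color-change rule makes everything blue. -/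
def IsZeroForcingSet {V : Type*} (G : SimpleGraph V) (S : Set V) : Prop :=
  ∃ k, (step G)^[k] S = Set.univ

/-- `S` is a failed zero forcing set. -/
def IsFailedSet {V : Type*} (G : SimpleGraph V) (S : Set V) : Prop :=
  ¬ IsZeroForcingSet G S

/-- The zero forcing number `Z(G)`. -/
noncomputable def Z {V : Type*} (G : SimpleGraph V) : ℕ :=
  sInf {k | ∃ S : Set V, S.ncard = k ∧ IsZeroForcingSet G S}

/-- The failed zero forcing number `F(G)`. -/
noncomputable def F {V : Type*} (G : SimpleGraph V) : ℕ :=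
  sSup {k | ∃ S : Set V, S.ncard = k ∧ IsFailedSet G S}

/-- The strong product of two simple graphs. -/
def strongProd {α β : Type*} (G : SimpleGraph α) (H : SimpleGraph β) :
    SimpleGraph (α × β) where
  Adj x y := x ≠ y ∧ (x.1 = y.1 ∨ G.Adj x.1 y.1) ∧ (x.2 = y.2 ∨ H.Adj x.2 y.2)
  symm := ⟨by
    rintro x y ⟨h1, h2, h3⟩
    exact ⟨h1.symm, h2.imp Eq.symm (fun h => G.adj_symm h), h3.imp Eq.symm (fun h => H.adj_symm h)⟩⟩
  loopless := ⟨fun x h => h.1 rfl⟩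

/-- The lexicographic product of two simple graphs. -/
def lexProd {α β : Type*} (G : SimpleGraph α) (H : SimpleGraph β) :
    SimpleGraph (α × β) where
  Adj x y := G.Adj x.1 y.1 ∨ (x.1 = y.1 ∧ H.Adj x.2 y.2)
  symm := ⟨by
    rintro x y (h | ⟨h1, h2⟩)
    · exact Or.inl h.symm
    · exact Or.inr ⟨h1.symm, h2.symm⟩⟩
  loopless := ⟨by
    rintro x (h | ⟨h1, h2⟩)
    · exact G.irrefl h
    · exact H.irrefl h2⟩

/-- The corona `G ∘ H`: one copy of `G` and, for each vertex `a` of `G`, a copy of `H`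
all of whose vertices are joined to `a`. -/
def corona {α β : Type*} (G : SimpleGraph α) (H : SimpleGraph β) :
    SimpleGraph (α ⊕ α × β) where
  Adj x y :=
    match x, y with
    | .inl a, .inl a' => G.Adj a a'
    | .inl a, .inr p => a = p.1
    | .inr p, .inl a' => p.1 = a'
    | .inr p, .inr q => p.1 = q.1 ∧ H.Adj p.2 q.2
  symm := ⟨by
    rintro (a | p) (a' | q) h
    · exact G.adj_symm h
    · exact h.symm
    · exact h.symm
    · exact ⟨h.1.symm, H.adj_symm h.2⟩⟩
  loopless := ⟨by
    rintro (a | p) h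
    · exact G.irrefl h
    · exact H.irrefl h.2⟩

end ZeroForcing

/-! A vertex with two white Cartesian neighbours also has two white strong neighbours, so no vertex
of `S` can ever force in `G ⊠ H`: the set `S` is a fixed point of the color-change rule, and it is
not the whole vertex set because its vertices have white neighbours. -/

namespace ZeroForcing

variable {V : Type*}

theorem boxProd_le_strongProd {α β : Type*} (G : SimpleGraph α) (H : SimpleGraph β) :
    G.boxProd H ≤ strongProd G H := by
  rintro ⟨a, b⟩ ⟨c, d⟩ (⟨hac, rfl⟩ | ⟨hbd, rfl⟩)
  · exact ⟨by simp [hac.ne], Or.inr hac, Or.inl rfl⟩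
  · exact ⟨by simp [hbd.ne], Or.inl rfl, Or.inr hbd⟩

theorem step_eq_self_of_le {G K : SimpleGraph V} (hKG : K ≤ G) {S : Set V}
    (hS : ∀ v ∈ S, 1 < {w | K.Adj v w ∧ w ∉ S}.ncard) : step G S = S := by
  refine Set.union_eq_left.mpr ?_
  rintro v ⟨u, hu, -, hforce⟩
  have hwhite := hS u hu
  obtain ⟨w₁, w₂, ⟨hw₁, hw₁S⟩, ⟨hw₂, hw₂S⟩, hne⟩ :=
    (Set.one_lt_ncard_iff (Set.finite_of_ncard_pos (one_pos.trans hwhite))).mp hwhite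
  exact absurd ((hforce w₁ (hKG hw₁) hw₁S).trans (hforce w₂ (hKG hw₂) hw₂S).symm) hne

theorem isFailedSet_of_step_eq_self {G : SimpleGraph V} {S : Set V} (hfix : step G S = S)
    (hS : S ≠ Set.univ) : IsFailedSet G S := by
  rintro ⟨k, hk⟩
  exact hS (Function.iterate_fixed hfix k ▸ hk)

theorem ncard_le_F [Finite V] {G : SimpleGraph V} {S : Set V} (hS : IsFailedSet G S) :
    S.ncard ≤ F G :=
  le_csSup ⟨Nat.card V, by rintro n ⟨T, rfl, -⟩; exact Set.ncard_le_card T⟩ ⟨S, rfl, hS⟩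

end ZeroForcing

open ZeroForcing in
theorem strongProd_failed_of_two_white_nbrs_in_boxProd {α β : Type*}
    [Fintype α] [Fintype β] [Nonempty α] [Nonempty β]
    (G : SimpleGraph α) (H : SimpleGraph β) (S : Set (α × β))
    (hS : ∀ v ∈ S, 2 ≤ Set.ncard {w | (G.boxProd H).Adj v w ∧ w ∉ S}) :
    ZeroForcing.IsFailedSet (ZeroForcing.strongProd G H) S ∧
      S.ncard ≤ ZeroForcing.F (ZeroForcing.strongProd G H) := by
  have hS_ne_univ : S ≠ Set.univ := by
    rintro rfl
    obtain ⟨v⟩ : Nonempty (α × β) := inferInstance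
    simpa using hS v trivial
  have hfail : IsFailedSet (strongProd G H) S :=
    isFailedSet_of_step_eq_self (step_eq_self_of_le (boxProd_le_strongProd G H) hS) hS_ne_univ
  exact ⟨hfail, ncard_le_F hfail⟩
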